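/- Let L be a COM on U and X, Y ∈ L covectors. The faces F(X) and F(Y) satisfy: the topes of F(X ∘ Y) are exactly the topes of F(X) attaining the minimum Hamming distance |Sep(X,Y)| to some tope of F(Y). -/
import Mathlib


variable {U : Type*} [Fintype U] [DecidableEq U]

/-- Composition of sign vectors. -/
def sComp (X Y : U → SignType) : U → SignType :=
  fun e => if X e = 0 then Y e else X e

/-- The sign-vector partial order. -/
def sLe (X Y : U → SignType) : Prop := ∀ e, X e = 0 ∨ X e = Y e

/-- A tope of a simple COM: a covector with full support. -/
def IsTope (L : Set (U → SignType)) (T : U → SignType) : Prop :=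
  T ∈ L ∧ ∀ e, T e ≠ 0

lemma ncard_ne_eq_hammingDist (T T' : U → SignType) :
    ({e : U | T e ≠ T' e}).ncard = hammingDist T T' := by
  simp [Set.ncard_eq_toFinset_card', Set.toFinset_setOf, hammingDist]

/-- in a COM `L`, the topes of `F(X ∘ Y)` are exactly the topes of `F(X)`
attaining the minimum Hamming distance `|Sep(X,Y)|` to some tope of `F(Y)`. -/
theorem topes_of_composition_face
    (L : Set (U → SignType))
    (hSE : ∀ X ∈ L, ∀ Y ∈ L, ∀ e, X e * Y e = -1 →
      ∃ Z ∈ L, Z e = 0 ∧ ∀ f, X f * Y f ≠ -1 → Z f = sComp X Y f)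
    (hFS : ∀ X ∈ L, ∀ Y ∈ L, sComp X (-Y) ∈ L)
    (hsimple : ∀ e : U, ∃ W ∈ L, W e ≠ 0)
    (X : U → SignType) (hX : X ∈ L) (Y : U → SignType) (hY : Y ∈ L)
    (T : U → SignType) (hT : IsTope L T) :
    sLe (sComp X Y) T ↔
      (sLe X T ∧ ∃ T', IsTope L T' ∧ sLe Y T' ∧
        hammingDist T T' = ({e : U | X e * Y e = -1}).ncard) := by
  -- composition closure
  have hcomp : ∀ A ∈ L, ∀ B ∈ L, sComp A B ∈ L := by
    intro A hA B hB
    have h1 := hFS A hA B hB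
    have h2 := hFS A hA _ h1
    have : sComp A (-(sComp A (-B))) = sComp A B := by
      funext e
      by_cases h : A e = 0 <;> simp [sComp, h]
    rwa [this] at h2
  constructor
  · intro h
    have hXT : sLe X T := by
      intro e
      by_cases hx : X e = 0
      · exact Or.inl hx
      · have := h e
        simpa [sComp, hx] using this
    refine ⟨hXT, sComp Y T, ⟨hcomp Y hY T hT.1, ?_⟩, ?_, ?_⟩
    · intro e
      by_cases hy : Y e = 0 <;> simp [sComp, hy, hT.2 e]
    · intro e
      by_cases hy : Y e = 0
      · exact Or.inl hy
      · exact Or.inr (by simp [sComp, hy])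
    · rw [← ncard_ne_eq_hammingDist]
      congr 1
      ext e
      simp only [Set.mem_setOf_eq, sComp]
      by_cases hy : Y e = 0
      · simp [hy]
      · simp only [hy, if_neg hy]
        by_cases hx : X e = 0
        · have hYT : Y e = T e := by
            have := h e
            simp [sComp, hx] at this
            rcases this with h0 | h0
            · exact absurd h0 hy
            · exact h0
          simp [hx, hYT]
        · have hXT' : X e = T e := by
            have := h e
            simpa [sComp, hx] using this
          constructor
          · intro hne
            rw [← hXT'] at hne
            revert hne hx hy
            rcases X e with _|_ <;> rcases Y e with _|_ <;> decide
          · intro hm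
            rw [← hXT']
            revert hm
            rcases X e with _|_ <;> rcases Y e with _|_ <;> decide
  · rintro ⟨hXT, T', ⟨hT'L, hT'full⟩, hYT', hd⟩
    -- Sep ⊆ Diff
    have hsub : {e : U | X e * Y e = -1} ⊆ {e : U | T e ≠ T' e} := by
      intro e he
      simp only [Set.mem_setOf_eq] at he ⊢
      have hx : X e ≠ 0 := by rintro h0; simp [h0] at he
      have hy : Y e ≠ 0 := by rintro h0; simp [h0] at he
      have h1 : T e = X e := ((hXT e).resolve_left hx).symm
      have h2 : T' e = Y e := ((hYT' e).resolve_left hy).symm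
      rw [h1, h2]
      revert he
      rcases X e with _|_ <;> rcases Y e with _|_ <;> decide
    have heq : {e : U | X e * Y e = -1} = {e : U | T e ≠ T' e} := by
      exact Set.eq_of_subset_of_ncard_le hsub
        (by rw [ncard_ne_eq_hammingDist, hd]) (Set.toFinite _)
    intro e
    by_cases hx : X e = 0
    · by_cases hy : Y e = 0
      · left; simp [sComp, hx, hy]
      · right
        have h2 : Y e = T' e := (hYT' e).resolve_left hy
        have hTT : T e = T' e := by
          have : e ∉ ({e : U | X e * Y e = -1} : Set U) := by simp [hx]
          rw [heq] at this
          simpa using this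
        show (if X e = 0 then Y e else X e) = T e
        rw [if_pos hx, h2, hTT]
    · simp only [sComp, hx, if_neg hx]
      exact Or.inr ((hXT e).resolve_left hx)
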